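/- arXiv:1510.06080 — 4 statements merged into one kernel-verified Lean document; each statement's English description precedes it below -/
import Mathlib

section
/- Under the hypotheses of the simple-laminate relations — C₋, C₊ isotropic elasticity tensors on Sym₃ with ⟦C⟧ = C₊ − C₋ invertible, ε₋ᵖ, ε₊ᵖ ∈ Sym₃, n a unit vector, m₁, m₂ ∈ (0,1) with m₁ + m₂ = 1, strains ε₁, ε₂ ∈ Sym₃ with m₁ε₁ + m₂ε₂ = ε₀ and ε₂ − ε₁ = −K₋(n):q₊ where q₊ = ⟦C⟧:ε₂ − (C₊:ε₊ᵖ − C₋:ε₋ᵖ) — define the layer stresses σ₁ = C₋:(ε₁ − ε₋ᵖ), σ₂ = C₊:(ε₂ − ε₊ᵖ) and the average stress σ₀ = m₁σ₁ + m₂σ₂. Assume L = (⟦C⟧⁻¹ + m₁K₋(n))⁻¹ exists and C₀ = C₋ + m₂L is invertible. Then σ₀ = C₀:(ε₀ − ε₀ᵖ), where the effective transformation strain is ε₀ᵖ = ε₋ᵖ + m₂ C₀⁻¹:L:⟦C⟧⁻¹:C₊:(ε₊ᵖ − ε₋ᵖ). -/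
open Matrix

noncomputable section

/-- 3×3 real matrices; symmetric ones model Sym₃. -/
abbrev Mat := Matrix (Fin 3) (Fin 3) ℝ

/-- Inner product on matrices: a:b = tr(ab). -/
def inn (a b : Mat) : ℝ := (a * b).trace

/-- Isotropic elasticity tensor with Lamé parameters l, m: ε ↦ l(tr ε)E + 2mε. -/
def isoC (l m : ℝ) (e : Mat) : Mat := (l * e.trace) • (1 : Mat) + (2*m) • e

/-- The interface operator K(n) for material parameters (μ, ν):
K(n):q = (1/(2μ))(qₙ⊗n + n⊗qₙ − (qₙₙ/(1−ν)) n⊗n). -/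
def Kop (μ ν : ℝ) (n : Fin 3 → ℝ) (q : Mat) : Mat :=
  (1/(2*μ)) • (vecMulVec (q.mulVec n) n + vecMulVec n (q.mulVec n)
    - ((n ⬝ᵥ q.mulVec n)/(1-ν)) • vecMulVec n n)



lemma isoC_sub (l m : ℝ) (a b : Mat) : isoC l m (a - b) = isoC l m a - isoC l m b := by
  simp only [isoC, Matrix.trace_sub]
  module

lemma isoC_add (l m : ℝ) (a b : Mat) : isoC l m (a + b) = isoC l m a + isoC l m b := by
  simp only [isoC, Matrix.trace_add]
  module

lemma isoC_smul (l m s : ℝ) (a : Mat) : isoC l m (s • a) = s • isoC l m a := by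
  simp only [isoC, Matrix.trace_smul, smul_eq_mul]
  module

/-- the effective constitutive law of a simple laminate:
σ₀ = C₀:(ε₀ − ε₀ᵖ) with C₀ = C₋ + m₂L and
ε₀ᵖ = ε₋ᵖ + m₂ C₀⁻¹:L:⟦C⟧⁻¹:C₊:(ε₊ᵖ − ε₋ᵖ). -/
theorem simple_laminate_effective_law
    (lm μm lp μp νm : ℝ) (hμm : 0 < μm) (hνm : νm < 1)
    (εpm εpp : Mat) (hεpm : εpm.IsSymm) (hεpp : εpp.IsSymm)
    (n : Fin 3 → ℝ) (hn : n ⬝ᵥ n = 1)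
    (m₁ m₂ : ℝ) (hm₁ : m₁ ∈ Set.Ioo (0:ℝ) 1) (hm₂ : m₂ ∈ Set.Ioo (0:ℝ) 1)
    (hm : m₁ + m₂ = 1)
    (D : Mat →ₗ[ℝ] Mat)
    (hD₁ : ∀ w : Mat, D (isoC lp μp w - isoC lm μm w) = w)
    (hD₂ : ∀ w : Mat, isoC lp μp (D w) - isoC lm μm (D w) = w)
    (ε₀ ε₁ ε₂ : Mat) (hε₁ : ε₁.IsSymm) (hε₂ : ε₂.IsSymm)
    (havg : m₁ • ε₁ + m₂ • ε₂ = ε₀)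
    (qp : Mat)
    (hqp : qp = (isoC lp μp ε₂ - isoC lm μm ε₂) - (isoC lp μp εpp - isoC lm μm εpm))
    (hjumpε : ε₂ - ε₁ = -(Kop μm νm n qp))
    (σ₁ σ₂ σ₀ : Mat)
    (hσ₁ : σ₁ = isoC lm μm (ε₁ - εpm))
    (hσ₂ : σ₂ = isoC lp μp (ε₂ - εpp))
    (hσ₀ : σ₀ = m₁ • σ₁ + m₂ • σ₂)
    (L : Mat →ₗ[ℝ] Mat)
    (hL₁ : ∀ r : Mat, L (D r + m₁ • Kop μm νm n r) = r)
    (hL₂ : ∀ r : Mat, D (L r) + m₁ • Kop μm νm n (L r) = r)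
    (C0inv : Mat →ₗ[ℝ] Mat)
    (hC0₁ : ∀ r : Mat, C0inv (isoC lm μm r + m₂ • L r) = r)
    (hC0₂ : ∀ r : Mat, isoC lm μm (C0inv r) + m₂ • L (C0inv r) = r)
    (ε0p : Mat)
    (hε0p : ε0p = εpm + m₂ • C0inv (L (D (isoC lp μp (εpp - εpm))))) :
    σ₀ = isoC lm μm (ε₀ - ε0p) + m₂ • L (ε₀ - ε0p) := by
  obtain ⟨hm₁0, hm₁1⟩ := hm₁
  have hm₂' : m₂ = 1 - m₁ := by linarith
  have hK : Kop μm νm n qp = ε₁ - ε₂ := by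
    have h := congrArg Neg.neg hjumpε
    simp only [neg_neg, neg_sub] at h
    exact h.symm
  have e1 : D qp = ε₂ - εpm - D (isoC lp μp (εpp - εpm)) := by
    rw [hqp]
    have hsplit : (isoC lp μp ε₂ - isoC lm μm ε₂) - (isoC lp μp εpp - isoC lm μm εpm)
        = (isoC lp μp ε₂ - isoC lm μm ε₂)
          - ((isoC lp μp εpm - isoC lm μm εpm) + isoC lp μp (εpp - εpm)) := by
      rw [isoC_sub]; abel
    rw [hsplit, map_sub, map_add, hD₁ ε₂, hD₁ εpm]
    abel
  have h1 : D qp + m₁ • Kop μm νm n qp = ε₀ - εpm - D (isoC lp μp (εpp - εpm)) := by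
    rw [e1, hK, ← havg, hm₂']
    module
  have h2 : qp = L (ε₀ - εpm - D (isoC lp μp (εpp - εpm))) := by
    rw [← h1, hL₁]
  have h3 := hC0₂ (L (D (isoC lp μp (εpp - εpm))))
  have hσ : σ₀ = isoC lm μm (ε₀ - εpm) + m₂ • qp := by
    rw [hσ₀, hσ₁, hσ₂, hqp, ← havg, hm₂']
    simp only [isoC_sub, isoC_add, isoC_smul]
    module
  rw [hσ, h2, hε0p]
  set t : Mat := L (D (isoC lp μp (εpp - εpm))) with ht
  set δ : Mat := C0inv t with hδ
  clear_value δ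
  clear_value t
  have hrw : ε₀ - (εpm + m₂ • δ) = (ε₀ - εpm) - m₂ • δ := by abel
  rw [hrw]
  simp only [isoC_sub, isoC_smul, map_sub, _root_.map_smul]
  have h3' : isoC lm μm δ = t - m₂ • L δ := by rw [← h3]; abel
  rw [h3', ht]
  simp only [isoC_sub, map_sub]
  module
end
end

section
/- Let μ₋ > 0, 0 ≤ ν₋ < 1/2, and let q ∈ Sym₃ have eigenvalues q₁, q₂, q₃. Let |q|_max denote the largest absolute value of an eigenvalue of q and |q|_min the smallest, and suppose q_min·q_max > 0 (where q_min, q_max are the smallest and largest eigenvalues) and (1−ν₋)·|q|_min ≥ ν₋·|q|_max. Then the maximum of 𝒦₋(n,q) over all unit vectors n ∈ ℝ³ equals ((1−2ν₋)/(2μ₋(1−ν₋)))·|q|_max², and it is attained at n* equal to a unit eigenvector of q associated with an eigenvalue of maximal absolute value; moreover for such n*, K₋(n*):q = ((1−2ν₋)/(2μ₋(1−ν₋)))·|q|_max·(±1)·n*⊗n*, i.e. K₋(n*):q is the rank-one matrix ((1−2ν₋)/(2μ₋(1−ν₋)))·q_{n*n*}·n*⊗n*. -/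
/-!
Write `λᵢ` for the eigenvalues, `M = |q|_max`, `m = |q|_min`, and expand a unit vector `n` in the
orthonormal eigenbasis, `tᵢ = (eᵢ ⬝ n)²`, so that `∑ tᵢ = 1`. Then
`2μ(1-ν) 𝒦(n, q) = 2(1-ν) ∑ λᵢ² tᵢ - (∑ λᵢ tᵢ)²`, and since the `λᵢ` share a sign the last square
is `S²` with `S = ∑ |λᵢ| tᵢ ∈ [m, M]`. As `m ≤ |λᵢ| ≤ M`, `∑ λᵢ² tᵢ ≤ (m + M) S - m M`, and the
resulting bound `2(1-ν)((m + M) S - m M) - S²` is concave in `S` with slope `2((1-ν) m - ν M) ≥ 0`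
at `S = M`. Hence it is maximal at `S = M`, where it equals `(1-2ν) M²`; this value is attained
at an eigenvector whose eigenvalue has modulus `M`.
-/

open Matrix

noncomputable section

section Orthonormal

variable {R ι : Type*} [CommRing R] [Fintype ι] [DecidableEq ι]

theorem transpose_mul_self_of_orthonormal {e : ι → ι → R}
    (horth : ∀ i j, e i ⬝ᵥ e j = if i = j then 1 else 0) :
    (of e)ᵀ * of e = 1 := by
  refine mul_eq_one_comm.mp ?_
  ext i j
  simpa [mul_apply, one_apply, dotProduct] using horth i j

theorem sum_dotProduct_smul_of_orthonormal {e : ι → ι → R}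
    (horth : ∀ i j, e i ⬝ᵥ e j = if i = j then 1 else 0) (v : ι → R) :
    ∑ i, (e i ⬝ᵥ v) • e i = v := by
  conv_rhs => rw [← one_mulVec v, ← transpose_mul_self_of_orthonormal horth, ← mulVec_mulVec]
  ext k
  simp [mulVec, dotProduct, Finset.sum_apply, mul_comm]

theorem dotProduct_eq_sum_of_orthonormal {e : ι → ι → R}
    (horth : ∀ i j, e i ⬝ᵥ e j = if i = j then 1 else 0) (u v : ι → R) :
    u ⬝ᵥ v = ∑ i, (e i ⬝ᵥ u) * (e i ⬝ᵥ v) := by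
  conv_lhs => rw [← sum_dotProduct_smul_of_orthonormal horth v]
  simp only [dotProduct_sum, dotProduct_smul, smul_eq_mul]
  exact Finset.sum_congr rfl fun i _ => by rw [dotProduct_comm u, mul_comm]

theorem dotProduct_mulVec_of_orthonormal_eigen {e : ι → ι → R} {ev : ι → R} {q : Matrix ι ι R}
    (horth : ∀ i j, e i ⬝ᵥ e j = if i = j then 1 else 0) (heig : ∀ i, q *ᵥ e i = ev i • e i)
    (k : ι) (v : ι → R) :
    e k ⬝ᵥ q *ᵥ v = ev k * (e k ⬝ᵥ v) := by
  conv_lhs => rw [← sum_dotProduct_smul_of_orthonormal horth v]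
  simp [mulVec_sum, mulVec_smul, heig, dotProduct_sum, dotProduct_smul, horth, mul_comm]

end Orthonormal

theorem sq_sum_abs_mul_of_same_sign {ι : Type*} [Fintype ι] {a : ι → ℝ} (t : ι → ℝ)
    (ha : (∀ i, 0 ≤ a i) ∨ (∀ i, a i ≤ 0)) :
    (∑ i, |a i| * t i) ^ 2 = (∑ i, a i * t i) ^ 2 := by
  rcases ha with ha | ha
  · simp only [abs_of_nonneg (ha _)]
  · simp only [abs_of_nonpos (ha _), neg_mul, Finset.sum_neg_distrib, neg_sq]

theorem two_mul_sum_sq_mul_sub_sq_le {ι : Type*} [Fintype ι] {a t : ι → ℝ} {ν m M : ℝ}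
    (hν : ν ≤ 1) (ham : ∀ i, m ≤ a i) (haM : ∀ i, a i ≤ M) (ht : ∀ i, 0 ≤ t i)
    (hsum : ∑ i, t i = 1) (hcond : ν * M ≤ (1 - ν) * m) :
    2 * (1 - ν) * ∑ i, a i ^ 2 * t i - (∑ i, a i * t i) ^ 2 ≤ (1 - 2 * ν) * M ^ 2 := by
  set S := ∑ i, a i * t i
  have hSM : S ≤ M := calc
    S ≤ ∑ i, M * t i := Finset.sum_le_sum fun i _ => mul_le_mul_of_nonneg_right (haM i) (ht i)
    _ = M := by rw [← Finset.mul_sum, hsum, mul_one]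
  have hQ : ∑ i, a i ^ 2 * t i ≤ (m + M) * S - m * M := calc
    ∑ i, a i ^ 2 * t i ≤ ∑ i, ((m + M) * a i - m * M) * t i :=
      Finset.sum_le_sum fun i _ => mul_le_mul_of_nonneg_right
        (by nlinarith [mul_nonneg (sub_nonneg.2 (ham i)) (sub_nonneg.2 (haM i))]) (ht i)
    _ = (m + M) * S - m * M := by
      simp only [sub_mul, Finset.sum_sub_distrib, mul_assoc, ← Finset.mul_sum, hsum, mul_one, S]
  -- the gap to the bound is at least `(M - S) (2 (1 - ν) m + (1 - 2ν) M - S)`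
  nlinarith [mul_le_mul_of_nonneg_left hQ (by linarith : (0 : ℝ) ≤ 2 * (1 - ν)),
    mul_nonneg (sub_nonneg.2 hSM) (by linarith : 0 ≤ 2 * (1 - ν) * m + (1 - 2 * ν) * M - S)]

theorem inn_Kop (μ ν : ℝ) (n : Fin 3 → ℝ) (q : Mat) :
    inn q (Kop μ ν n q) = 1 / (2 * μ) *
      (q *ᵥ (q *ᵥ n) ⬝ᵥ n + q *ᵥ n ⬝ᵥ q *ᵥ n - (n ⬝ᵥ q *ᵥ n) ^ 2 / (1 - ν)) := by
  simp only [inn, Kop, Matrix.mul_smul, mul_sub, mul_add, trace_smul, trace_sub, trace_add,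
    mul_vecMulVec, trace_vecMulVec, smul_eq_mul]
  rw [dotProduct_comm (q *ᵥ n) n]
  ring

theorem inn_Kop_of_orthonormal_eigen {e : Fin 3 → Fin 3 → ℝ} {ev : Fin 3 → ℝ} {q : Mat}
    (horth : ∀ i j, e i ⬝ᵥ e j = if i = j then 1 else 0) (heig : ∀ i, q *ᵥ e i = ev i • e i)
    (μ ν : ℝ) (n : Fin 3 → ℝ) :
    inn q (Kop μ ν n q) = 1 / (2 * μ) * (2 * ∑ i, ev i ^ 2 * (e i ⬝ᵥ n) ^ 2
      - (∑ i, ev i * (e i ⬝ᵥ n) ^ 2) ^ 2 / (1 - ν)) := by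
  rw [inn_Kop, dotProduct_eq_sum_of_orthonormal horth (q *ᵥ (q *ᵥ n)),
    dotProduct_eq_sum_of_orthonormal horth (q *ᵥ n), dotProduct_eq_sum_of_orthonormal horth n]
  simp only [dotProduct_mulVec_of_orthonormal_eigen horth heig, Fin.sum_univ_three]
  ring

theorem Kop_of_mulVec_eq_smul {μ ν c : ℝ} {q : Mat} {v : Fin 3 → ℝ} (hν : ν ≠ 1)
    (hv : v ⬝ᵥ v = 1) (hqv : q *ᵥ v = c • v) :
    Kop μ ν v q = ((1 - 2 * ν) / (2 * μ * (1 - ν)) * c) • vecMulVec v v := by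
  have h1ν : 1 - ν ≠ 0 := sub_ne_zero.2 hν.symm
  rw [Kop, hqv, dotProduct_smul, hv, smul_eq_mul, mul_one]
  ext i k
  simp only [Matrix.smul_apply, Matrix.sub_apply, Matrix.add_apply, vecMulVec_apply,
    Pi.smul_apply, smul_eq_mul]
  field_simp
  ring

theorem inn_Kop_of_mulVec_eq_smul {μ ν c : ℝ} {q : Mat} {v : Fin 3 → ℝ} (hν : ν ≠ 1)
    (hv : v ⬝ᵥ v = 1) (hqv : q *ᵥ v = c • v) :
    inn q (Kop μ ν v q) = (1 - 2 * ν) / (2 * μ * (1 - ν)) * c ^ 2 := by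
  rw [inn, Kop_of_mulVec_eq_smul hν hv hqv, Matrix.mul_smul, trace_smul, mul_vecMulVec,
    trace_vecMulVec, hqv, smul_dotProduct, hv, smul_eq_mul, smul_eq_mul]
  ring

theorem Kform_max_direct_general
    (μm νm : ℝ) (hμ : 0 < μm) (hν : νm < 1/2)
    (q : Mat)
    (e : Fin 3 → (Fin 3 → ℝ)) (ev : Fin 3 → ℝ)
    (horth : ∀ i j, e i ⬝ᵥ e j = if i = j then (1:ℝ) else 0)
    (heig : ∀ i, q.mulVec (e i) = ev i • e i)
    (hsign : (∀ i, 0 < ev i) ∨ (∀ i, ev i < 0))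
    (jmax jmin : Fin 3)
    (hjmax : ∀ i, |ev i| ≤ |ev jmax|) (hjmin : ∀ i, |ev jmin| ≤ |ev i|)
    (hcond : νm * |ev jmax| ≤ (1-νm) * |ev jmin|) :
    (∀ nvec : Fin 3 → ℝ, nvec ⬝ᵥ nvec = 1 →
        inn q (Kop μm νm nvec q) ≤ (1-2*νm)/(2*μm*(1-νm)) * (ev jmax)^2)
    ∧ ∀ j : Fin 3, (∀ i, |ev i| ≤ |ev j|) →
        inn q (Kop μm νm (e j) q) = (1-2*νm)/(2*μm*(1-νm)) * (ev jmax)^2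
        ∧ Kop μm νm (e j) q
            = ((1-2*νm)/(2*μm*(1-νm)) * ev j) • vecMulVec (e j) (e j) := by
  have h1ν : 0 < 1 - νm := by linarith
  have hunit : ∀ j, e j ⬝ᵥ e j = 1 := fun j => by simpa using horth j j
  refine ⟨fun n hn => ?_, fun j hj => ⟨?_, Kop_of_mulVec_eq_smul (by linarith) (hunit j) (heig j)⟩⟩
  · have hsum : ∑ i, (e i ⬝ᵥ n) ^ 2 = 1 := by
      simpa only [sq, ← dotProduct_eq_sum_of_orthonormal horth] using hn
    have key := two_mul_sum_sq_mul_sub_sq_le (a := fun i => |ev i|) (ν := νm) (by linarith)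
      hjmin hjmax (fun i => sq_nonneg (e i ⬝ᵥ n)) hsum hcond
    rw [sq_sum_abs_mul_of_same_sign _ (hsign.imp (fun h i => (h i).le) (fun h i => (h i).le))]
      at key
    simp only [sq_abs] at key
    calc inn q (Kop μm νm n q)
        = (2 * (1 - νm) * ∑ i, ev i ^ 2 * (e i ⬝ᵥ n) ^ 2 - (∑ i, ev i * (e i ⬝ᵥ n) ^ 2) ^ 2)
          / (2 * μm * (1 - νm)) := by
          rw [inn_Kop_of_orthonormal_eigen horth heig]; field_simp
      _ ≤ (1 - 2 * νm) * ev jmax ^ 2 / (2 * μm * (1 - νm)) := by gcongr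
      _ = (1-2*νm)/(2*μm*(1-νm)) * (ev jmax)^2 := by ring
  · rw [inn_Kop_of_mulVec_eq_smul (by linarith) (hunit j) (heig j),
      (sq_eq_sq_iff_abs_eq_abs _ _).2 (le_antisymm (hjmax j) (hj jmax))]

/-- maximization of 𝒦₋(n,q) over unit normals in the "direct" regime
(all eigenvalues of the same sign and (1−ν)|q|_min ≥ ν|q|_max): the maximum equals
((1−2ν)/(2μ(1−ν)))|q|_max², attained at any unit eigenvector with eigenvalue of
maximal absolute value, where K₋(n*):q = ((1−2ν)/(2μ(1−ν)))·q_{n*n*}·n*⊗n*. -/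
theorem Kform_max_direct
    (μm νm : ℝ) (hμ : 0 < μm) (hν0 : 0 ≤ νm) (hν : νm < 1/2)
    (q : Mat) (hq : q.IsSymm)
    (e : Fin 3 → (Fin 3 → ℝ)) (ev : Fin 3 → ℝ)
    (horth : ∀ i j, e i ⬝ᵥ e j = if i = j then (1:ℝ) else 0)
    (heig : ∀ i, q.mulVec (e i) = ev i • e i)
    (hsign : (∀ i, 0 < ev i) ∨ (∀ i, ev i < 0))
    (jmax jmin : Fin 3)
    (hjmax : ∀ i, |ev i| ≤ |ev jmax|) (hjmin : ∀ i, |ev jmin| ≤ |ev i|)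
    (hcond : νm * |ev jmax| ≤ (1-νm) * |ev jmin|) :
    (∀ nvec : Fin 3 → ℝ, nvec ⬝ᵥ nvec = 1 →
        inn q (Kop μm νm nvec q) ≤ (1-2*νm)/(2*μm*(1-νm)) * (ev jmax)^2)
    ∧ ∀ j : Fin 3, (∀ i, |ev i| ≤ |ev j|) →
        inn q (Kop μm νm (e j) q) = (1-2*νm)/(2*μm*(1-νm)) * (ev jmax)^2
        ∧ Kop μm νm (e j) q
            = ((1-2*νm)/(2*μm*(1-νm)) * ev j) • vecMulVec (e j) (e j) :=
  Kform_max_direct_general μm νm hμ hν q e ev horth heig hsign jmax jmin hjmax hjmin hcond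
end
end

section
/- Let μ₋ > 0, 0 ≤ ν₋ < 1/2, let k ∈ ℝ³ be a unit vector, and let q₊ = q(E − k⊗k) + q_k k⊗k ∈ Sym₃ be axisymmetric with q ≠ q_k. Suppose either q_k·q < 0, or q_k·q > 0 and (1−ν₋)·min(|q_k|,|q|) < ν₋·max(|q_k|,|q|). Then the maximum of 𝒦₋(n,q₊) over unit vectors n ∈ ℝ³ equals ((1−ν₋)/(2μ₋))(q_k² + q²) − (ν₋/μ₋)·q_k·q, and it is attained exactly at the unit vectors n whose projection onto k satisfies (n·k)² = ((1−ν₋)q_k − ν₋q)/(q_k − q). In particular the maximizing normal is not unique: every unit vector with this value of (n·k)² is a maximizer. -/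
open Matrix

noncomputable section

/-! The axisymmetric tensor q₊ has eigenvalues q (double) and q_k, so
q₊² = (q_k + q) q₊ − q_k q E. Hence N₂ = (q_k + q) N₁ − q_k q, and 𝒦₋(n, q₊) is a concave
quadratic in N₁ = q + (q_k − q)(n·k)² alone, with vertex at N₁ = (1 − ν₋)(q_k + q).
Completing the square writes the maximum minus 𝒦₋(n, q₊) as a square. -/

namespace Matrix

variable {n R : Type*} [Fintype n] [CommRing R]

theorem trace_mul_vecMulVec (A : Matrix n n R) (u v : n → R) :
    (A * vecMulVec u v).trace = A *ᵥ u ⬝ᵥ v := by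
  rw [mul_vecMulVec, trace_vecMulVec]

theorem IsSymm.dotProduct_mul_self_mulVec {A : Matrix n n R} (hA : A.IsSymm) (v : n → R) :
    v ⬝ᵥ (A * A) *ᵥ v = A *ᵥ v ⬝ᵥ A *ᵥ v := by
  rw [← mulVec_mulVec, dotProduct_mulVec, ← mulVec_transpose, hA.eq]

end Matrix

theorem inn_Kop_self (μ ν : ℝ) (n : Fin 3 → ℝ) {q : Mat} (hq : q.IsSymm) :
    inn q (Kop μ ν n q)
      = 1/μ * (n ⬝ᵥ (q * q) *ᵥ n - (n ⬝ᵥ q *ᵥ n)^2 / (2*(1-ν))) := by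
  simp only [inn, Kop, Matrix.mul_smul, Matrix.mul_add, Matrix.mul_sub, trace_smul, trace_add,
    trace_sub, trace_mul_vecMulVec, smul_eq_mul, hq.dotProduct_mul_self_mulVec]
  rw [dotProduct_comm (q *ᵥ q *ᵥ n) n, dotProduct_comm (q *ᵥ n) n,
    ← hq.dotProduct_mul_self_mulVec, mulVec_mulVec]
  simp only [div_eq_mul_inv, mul_inv]
  ring

section Axisymmetric

variable {n R : Type*} [DecidableEq n] [CommRing R]

def axisym (k : n → R) (qv qk : R) : Matrix n n R :=
  qv • ((1 : Matrix n n R) - vecMulVec k k) + qk • vecMulVec k k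

theorem isSymm_axisym (k : n → R) (qv qk : R) : (axisym k qv qk).IsSymm := by
  simp [IsSymm, axisym, transpose_vecMulVec]

variable [Fintype n]

theorem dotProduct_axisym_mulVec (k v : n → R) (qv qk : R) :
    v ⬝ᵥ axisym k qv qk *ᵥ v = qv * (v ⬝ᵥ v) + (qk - qv) * (v ⬝ᵥ k)^2 := by
  simp only [axisym, add_mulVec, smul_mulVec, sub_mulVec, one_mulVec, vecMulVec_mulVec,
    op_smul_eq_smul, dotProduct_add, dotProduct_sub, dotProduct_smul, smul_eq_mul,
    dotProduct_comm k v]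
  ring

theorem axisym_mul_self {k : n → R} (hk : k ⬝ᵥ k = 1) (qv qk : R) :
    axisym k qv qk * axisym k qv qk = (qk + qv) • axisym k qv qk - (qk * qv) • 1 := by
  have hP : vecMulVec k k * vecMulVec k k = vecMulVec k k := by
    rw [vecMulVec_mul_vecMulVec, hk, one_smul]
  simp only [axisym, add_mul, mul_add, sub_mul, mul_sub, smul_mul_smul, Matrix.mul_one,
    Matrix.one_mul, hP, mul_smul]
  module

end Axisymmetric

theorem Kform_axisym_gap (μ ν a b t : ℝ) (hμ : μ ≠ 0) (hν : ν ≠ 1) :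
    (1-ν)/(2*μ) * (a^2 + b^2) - ν/μ * (a*b)
      - 1/μ * ((a + b) * (b + (a - b) * t) - a * b - (b + (a - b) * t)^2 / (2*(1-ν)))
      = ((a - b) * t - ((1-ν)*a - ν*b))^2 / (2*μ*(1-ν)) := by
  have : 1 - ν ≠ 0 := sub_ne_zero.mpr (Ne.symm hν)
  field_simp
  ring

theorem inn_axisym_Kop {k n : Fin 3 → ℝ} (hk : k ⬝ᵥ k = 1) (hn : n ⬝ᵥ n = 1)
    {μ ν : ℝ} (hμ : μ ≠ 0) (hν : ν ≠ 1) (qv qk : ℝ) :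
    inn (axisym k qv qk) (Kop μ ν n (axisym k qv qk))
      = (1-ν)/(2*μ) * (qk^2 + qv^2) - ν/μ * (qk*qv)
        - ((qk - qv) * (n ⬝ᵥ k)^2 - ((1-ν)*qk - ν*qv))^2 / (2*μ*(1-ν)) := by
  rw [← Kform_axisym_gap μ ν qk qv _ hμ hν, inn_Kop_self _ _ _ (isSymm_axisym k qv qk),
    axisym_mul_self hk, sub_mulVec, smul_mulVec, smul_mulVec, one_mulVec, dotProduct_sub,
    dotProduct_smul, dotProduct_smul, dotProduct_axisym_mulVec, hn]
  simp only [smul_eq_mul]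
  ring

theorem Kform_max_axisymmetric_general
    (μm νm : ℝ) (hμ : 0 < μm) (hν : νm < 1/2)
    (k : Fin 3 → ℝ) (hk : k ⬝ᵥ k = 1)
    (qv qk : ℝ) (hne : qv ≠ qk)
    (qp : Mat) (hqp : qp = qv • ((1 : Mat) - vecMulVec k k) + qk • vecMulVec k k) :
    (∀ nvec : Fin 3 → ℝ, nvec ⬝ᵥ nvec = 1 →
        inn qp (Kop μm νm nvec qp)
          ≤ (1-νm)/(2*μm) * (qk^2 + qv^2) - νm/μm * (qk*qv))
    ∧ ∀ nvec : Fin 3 → ℝ, nvec ⬝ᵥ nvec = 1 →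
        (inn qp (Kop μm νm nvec qp)
            = (1-νm)/(2*μm) * (qk^2 + qv^2) - νm/μm * (qk*qv)
          ↔ (nvec ⬝ᵥ k)^2 = ((1-νm)*qk - νm*qv)/(qk - qv)) := by
  obtain rfl : qp = axisym k qv qk := hqp
  have hν1 : νm < 1 := by linarith
  have hden : 0 < 2 * μm * (1 - νm) := mul_pos (mul_pos two_pos hμ) (sub_pos.2 hν1)
  have hK (n : Fin 3 → ℝ) (hn : n ⬝ᵥ n = 1) := inn_axisym_Kop hk hn hμ.ne' hν1.ne qv qk
  refine ⟨fun n hn ↦ ?_, fun n hn ↦ ?_⟩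
  · rw [hK n hn]
    exact sub_le_self _ (div_nonneg (sq_nonneg _) hden.le)
  · rw [hK n hn, sub_eq_self, div_eq_zero_iff, or_iff_left hden.ne', pow_eq_zero_iff two_ne_zero,
      sub_eq_zero, eq_div_iff (sub_ne_zero.2 hne.symm), mul_comm]

/-- for an axisymmetric tensor q₊ = q(E − k⊗k) + q_k k⊗k in the inclined
regime, the maximum of 𝒦₋(n,q₊) over unit normals equals
((1−ν)/(2μ))(q_k² + q²) − (ν/μ)q_k q, and a unit vector n is a maximizer if and only if
(n·k)² = ((1−ν)q_k − νq)/(q_k − q); in particular the maximizer is not unique. -/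
theorem Kform_max_axisymmetric
    (μm νm : ℝ) (hμ : 0 < μm) (hν0 : 0 ≤ νm) (hν : νm < 1/2)
    (k : Fin 3 → ℝ) (hk : k ⬝ᵥ k = 1)
    (qv qk : ℝ) (hne : qv ≠ qk)
    (qp : Mat) (hqp : qp = qv • ((1 : Mat) - vecMulVec k k) + qk • vecMulVec k k)
    (hcase : qk * qv < 0 ∨
      (0 < qk * qv ∧ (1-νm) * min |qk| |qv| < νm * max |qk| |qv|)) :
    (∀ nvec : Fin 3 → ℝ, nvec ⬝ᵥ nvec = 1 →
        inn qp (Kop μm νm nvec qp)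
          ≤ (1-νm)/(2*μm) * (qk^2 + qv^2) - νm/μm * (qk*qv))
    ∧ ∀ nvec : Fin 3 → ℝ, nvec ⬝ᵥ nvec = 1 →
        (inn qp (Kop μm νm nvec qp)
            = (1-νm)/(2*μm) * (qk^2 + qv^2) - νm/μm * (qk*qv)
          ↔ (nvec ⬝ᵥ k)^2 = ((1-νm)*qk - νm*qv)/(qk - qv)) :=
  Kform_max_axisymmetric_general μm νm hμ hν k hk qv qk hne qp hqp
end
end

section
/- Let C₋, C₊ and T be self-adjoint linear operators on Sym₃ such that C₋ − T and C₊ − T are positive semidefinite, let ε₋ᵖ, ε₊ᵖ ∈ Sym₃, let m₋, m₊ ∈ (0,1) with m₋ + m₊ = 1, and let ε₀ ∈ Sym₃. Define the translated energies w^t₋(ε) = (1/2)(ε−ε₋ᵖ):(C₋:(ε−ε₋ᵖ)) − (1/2)ε:(T:ε) and w^t₊(ε) = (1/2)(ε−ε₊ᵖ):(C₊:(ε−ε₊ᵖ)) − (1/2)ε:(T:ε). Assume N = m₋C₊ + m₊C₋ − T is invertible, and set ε̄₋ = N⁻¹:((C₊ − T):ε₀ − m₊·(C₊:ε₊ᵖ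 − C₋:ε₋ᵖ)) and ε̄₊ = N⁻¹:((C₋ − T):ε₀ + m₋·(C₊:ε₊ᵖ − C₋:ε₋ᵖ)). Then m₋ε̄₋ + m₊ε̄₊ = ε₀, and for every pair (a, b) ∈ Sym₃ × Sym₃ with m₋a + m₊b = ε₀ one has m₋w^t₋(a) + m₊w^t₊(b) ≥ m₋w^t₋(ε̄₋) + m₊w^t₊(ε̄₊). -/
open Matrix

noncomputable section

lemma inn_comm (a b : Mat) : inn a b = inn b a := Matrix.trace_mul_comm a b

lemma inn_add_left (a b c : Mat) : inn (a + b) c = inn a c + inn b c := by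
  simp [inn, add_mul]
lemma inn_add_right (a b c : Mat) : inn a (b + c) = inn a b + inn a c := by
  simp [inn, mul_add]
lemma inn_sub_right (a b c : Mat) : inn a (b - c) = inn a b - inn a c := by
  simp [inn, mul_sub]
lemma inn_smul_left (r : ℝ) (a b : Mat) : inn (r • a) b = r * inn a b := by
  simp [inn, smul_mul_assoc]
lemma inn_zero_left (b : Mat) : inn 0 b = 0 := by simp [inn]

lemma quad_expand (C : Mat →ₗ[ℝ] Mat)
    (hCsa : ∀ x y : Mat, x.IsSymm → y.IsSymm → inn (C x) y = inn x (C y))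
    (e u p : Mat) (he : e.IsSymm) (hu : u.IsSymm) (hp : p.IsSymm) :
    (1/2) * inn (e + u - p) (C (e + u - p)) =
      (1/2) * inn (e - p) (C (e - p)) + inn u (C (e - p)) + (1/2) * inn u (C u) := by
  have h1 : e + u - p = (e - p) + u := by abel
  rw [h1, map_add, inn_add_left, inn_add_right, inn_add_right]
  have h2 : inn (e - p) (C u) = inn u (C (e - p)) := by
    rw [← hCsa (e - p) u (he.sub hp) hu, inn_comm]
  rw [h2]; ring

lemma quad_expand0 (C : Mat →ₗ[ℝ] Mat)
    (hCsa : ∀ x y : Mat, x.IsSymm → y.IsSymm → inn (C x) y = inn x (C y))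
    (e u : Mat) (he : e.IsSymm) (hu : u.IsSymm) :
    (1/2) * inn (e + u) (C (e + u)) =
      (1/2) * inn e (C e) + inn u (C e) + (1/2) * inn u (C u) := by
  have := quad_expand C hCsa e u 0 he hu Matrix.isSymm_zero
  simpa using this

/-- the translation-optimal average strains
ε̄₋ = N⁻¹:((C₊−T):ε₀ − m₊(C₊:ε₊ᵖ − C₋:ε₋ᵖ)), ε̄₊ = N⁻¹:((C₋−T):ε₀ + m₋(C₊:ε₊ᵖ − C₋:ε₋ᵖ))
satisfy the average constraint and minimize the translated energy
m₋w^t₋(a) + m₊w^t₊(b) among all symmetric (a,b) with m₋a + m₊b = ε₀. -/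
theorem translated_energy_minimizers
    (Cm Cp T : Mat →ₗ[ℝ] Mat)
    (hCms : ∀ a : Mat, a.IsSymm → (Cm a).IsSymm)
    (hCps : ∀ a : Mat, a.IsSymm → (Cp a).IsSymm)
    (hTs : ∀ a : Mat, a.IsSymm → (T a).IsSymm)
    (hCmsa : ∀ a b : Mat, a.IsSymm → b.IsSymm → inn (Cm a) b = inn a (Cm b))
    (hCpsa : ∀ a b : Mat, a.IsSymm → b.IsSymm → inn (Cp a) b = inn a (Cp b))
    (hTsa : ∀ a b : Mat, a.IsSymm → b.IsSymm → inn (T a) b = inn a (T b))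
    (hCmT : ∀ a : Mat, a.IsSymm → 0 ≤ inn (Cm a - T a) a)
    (hCpT : ∀ a : Mat, a.IsSymm → 0 ≤ inn (Cp a - T a) a)
    (εpm εpp : Mat) (hεpm : εpm.IsSymm) (hεpp : εpp.IsSymm)
    (mm mp : ℝ) (hmm : mm ∈ Set.Ioo (0:ℝ) 1) (hmp : mp ∈ Set.Ioo (0:ℝ) 1)
    (hsum : mm + mp = 1)
    (ε₀ : Mat) (hε₀ : ε₀.IsSymm)
    (Ninv : Mat →ₗ[ℝ] Mat)
    (hNs : ∀ a : Mat, a.IsSymm → (Ninv a).IsSymm)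
    (hN₁ : ∀ a : Mat, a.IsSymm → Ninv (mm • Cp a + mp • Cm a - T a) = a)
    (hN₂ : ∀ a : Mat, a.IsSymm → mm • Cp (Ninv a) + mp • Cm (Ninv a) - T (Ninv a) = a)
    (εm εp : Mat)
    (hεm : εm = Ninv ((Cp ε₀ - T ε₀) - mp • (Cp εpp - Cm εpm)))
    (hεp : εp = Ninv ((Cm ε₀ - T ε₀) + mm • (Cp εpp - Cm εpm))) :
    mm • εm + mp • εp = ε₀
    ∧ ∀ a b : Mat, a.IsSymm → b.IsSymm → mm • a + mp • b = ε₀ →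
        mm * ((1/2) * inn (εm - εpm) (Cm (εm - εpm)) - (1/2) * inn εm (T εm))
          + mp * ((1/2) * inn (εp - εpp) (Cp (εp - εpp)) - (1/2) * inn εp (T εp))
        ≤ mm * ((1/2) * inn (a - εpm) (Cm (a - εpm)) - (1/2) * inn a (T a))
          + mp * ((1/2) * inn (b - εpp) (Cp (b - εpp)) - (1/2) * inn b (T b)) := by
  have hmp' : mp = 1 - mm := by linarith
  subst hmp'
  -- symmetry facts
  have hds : (Cp εpp - Cm εpm).IsSymm := (hCps _ hεpp).sub (hCms _ hεpm)
  have hXs : ((Cp ε₀ - T ε₀) - (1 - mm) • (Cp εpp - Cm εpm)).IsSymm :=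
    ((hCps _ hε₀).sub (hTs _ hε₀)).sub (hds.smul _)
  have hYs : ((Cm ε₀ - T ε₀) + mm • (Cp εpp - Cm εpm)).IsSymm :=
    ((hCms _ hε₀).sub (hTs _ hε₀)).add (hds.smul _)
  have hεms : εm.IsSymm := hεm ▸ hNs _ hXs
  have hεps : εp.IsSymm := hεp ▸ hNs _ hYs
  -- N applied to εm, εp
  have hNm : mm • Cp εm + (1 - mm) • Cm εm - T εm
      = (Cp ε₀ - T ε₀) - (1 - mm) • (Cp εpp - Cm εpm) := by
    rw [hεm]; exact hN₂ _ hXs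
  have hNp : mm • Cp εp + (1 - mm) • Cm εp - T εp
      = (Cm ε₀ - T ε₀) + mm • (Cp εpp - Cm εpm) := by
    rw [hεp]; exact hN₂ _ hYs
  -- the average constraint
  have hconstr : mm • εm + (1 - mm) • εp = ε₀ := by
    have h1 : mm • εm + (1 - mm) • εp
        = Ninv (mm • ((Cp ε₀ - T ε₀) - (1 - mm) • (Cp εpp - Cm εpm))
            + (1 - mm) • ((Cm ε₀ - T ε₀) + mm • (Cp εpp - Cm εpm))) := by
      rw [hεm, hεp]
      simp only [map_add, map_sub, _root_.map_smul]
    have h2 : mm • ((Cp ε₀ - T ε₀) - (1 - mm) • (Cp εpp - Cm εpm))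
        + (1 - mm) • ((Cm ε₀ - T ε₀) + mm • (Cp εpp - Cm εpm))
        = mm • Cp ε₀ + (1 - mm) • Cm ε₀ - T ε₀ := by module
    rw [h1, h2, hN₁ ε₀ hε₀]
  refine ⟨hconstr, fun a b ha hb hab => ?_⟩
  -- stationarity
  have hCmsum : mm • Cm εm + (1 - mm) • Cm εp = Cm ε₀ := by
    rw [← hconstr, map_add, _root_.map_smul, _root_.map_smul]
  have hCpsum : mm • Cp εm + (1 - mm) • Cp εp = Cp ε₀ := by
    rw [← hconstr, map_add, _root_.map_smul, _root_.map_smul]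
  have hstat : Cm εm - T εm - Cm εpm = Cp εp - T εp - Cp εpp := by
    have key : (Cm εm - T εm - Cm εpm) - (Cp εp - T εp - Cp εpp)
        = ((mm • Cp εm + (1 - mm) • Cm εm - T εm)
              - ((Cp ε₀ - T ε₀) - (1 - mm) • (Cp εpp - Cm εpm)))
          - ((mm • Cp εp + (1 - mm) • Cm εp - T εp)
              - ((Cm ε₀ - T ε₀) + mm • (Cp εpp - Cm εpm)))
          + ((mm • Cm εm + (1 - mm) • Cm εp) - Cm ε₀)
          - ((mm • Cp εm + (1 - mm) • Cp εp) - Cp ε₀) := by module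
    rw [hNm, hNp, hCmsum, hCpsum] at key
    simp only [sub_self, add_zero, sub_zero, zero_sub, zero_add, neg_zero] at key
    exact sub_eq_zero.mp key
  -- perturbations
  set u := a - εm with hu
  set v := b - εp with hv
  have hus : u.IsSymm := ha.sub hεms
  have hvs : v.IsSymm := hb.sub hεps
  have huv : mm • u + (1 - mm) • v = 0 := by
    have h3 : mm • u + (1 - mm) • v
        = (mm • a + (1 - mm) • b) - (mm • εm + (1 - mm) • εp) := by
      rw [hu, hv]; module
    rw [h3, hab, hconstr, sub_self]
  have ha' : a = εm + u := by rw [hu]; abel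
  have hb' : b = εp + v := by rw [hv]; abel
  -- expansions
  have hRm : (1/2) * inn (a - εpm) (Cm (a - εpm)) - (1/2) * inn a (T a)
      = ((1/2) * inn (εm - εpm) (Cm (εm - εpm)) - (1/2) * inn εm (T εm))
        + inn u (Cm εm - T εm - Cm εpm) + (1/2) * inn u (Cm u - T u) := by
    rw [ha', quad_expand Cm hCmsa εm u εpm hεms hus hεpm,
      quad_expand0 T hTsa εm u hεms hus]
    simp only [map_sub, inn_sub_right]
    ring
  have hRp : (1/2) * inn (b - εpp) (Cp (b - εpp)) - (1/2) * inn b (T b)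
      = ((1/2) * inn (εp - εpp) (Cp (εp - εpp)) - (1/2) * inn εp (T εp))
        + inn v (Cm εm - T εm - Cm εpm) + (1/2) * inn v (Cp v - T v) := by
    rw [hb', quad_expand Cp hCpsa εp v εpp hεps hvs hεpp,
      quad_expand0 T hTsa εp v hεps hvs, hstat]
    simp only [map_sub, inn_sub_right]
    ring
  -- positivity and linear-term vanishing
  have hqm : 0 ≤ inn u (Cm u - T u) := by rw [inn_comm]; exact hCmT u hus
  have hqp : 0 ≤ inn v (Cp v - T v) := by rw [inn_comm]; exact hCpT v hvs
  have hlin : mm * inn u (Cm εm - T εm - Cm εpm)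
      + (1 - mm) * inn v (Cm εm - T εm - Cm εpm) = 0 := by
    rw [← inn_smul_left, ← inn_smul_left, ← inn_add_left, huv, inn_zero_left]
  have h1 : 0 ≤ mm * ((1/2) * inn u (Cm u - T u)) :=
    mul_nonneg hmm.1.le (by linarith)
  have h2 : 0 ≤ (1 - mm) * ((1/2) * inn v (Cp v - T v)) :=
    mul_nonneg (by linarith [hmp.1]) (by linarith)
  rw [hRm, hRp]
  nlinarith [hlin, h1, h2]
end
end
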